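/- Let K be a finite simplicial complex, f an injective filtration function, and suppose [a, b) is a bar of the n-th persistence module {H_n(K^f_r)}_{r∈ℝ} represented by a class [α] born at a and terminating at b. Choose ε < (b − a)/4 and assume every other bar [a_i, b_i) of {H_n(K^f_r)} satisfies a_i > a + 2ε or b_i < b − 2ε. Let g be an injective filtration function with ‖f − g‖_∞ ≤ ε, and suppose a bottleneck matching between the barcodes of K^f and K^g (with matched endpoints differing by at most ε and unmatched bars of length at most 2ε) matches [a, b) to a bar [a', b') of {H_n(K^g_r)}. Then the class [α], viewed in the filtration K^g, terminates exactly at b'. -/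

import Mathlib

open scoped BigOperators

/-- A finite simplicial complex on vertex type `V`: a finite family of nonempty
finite vertex sets closed under passing to nonempty subsets. -/
structure SComplex (V : Type*) where
  faces : Finset (Finset V)
  nonempty_of_mem : ∀ s ∈ faces, s.Nonempty
  down_closed : ∀ s ∈ faces, ∀ t ⊆ s, t.Nonempty → t ∈ faces

variable {V : Type*} [LinearOrder V]

/-- `f` is an injective filtration function on `K`: face-monotone and injective on faces. -/
def IsFiltrationFun (K : SComplex V) (f : Finset V → ℝ) : Prop :=
  (∀ s ∈ K.faces, ∀ t ∈ K.faces, s ⊆ t → f s ≤ f t) ∧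
  (∀ s ∈ K.faces, ∀ t ∈ K.faces, f s = f t → s = t)

/-- The sup-distance between `f` and `g` over the faces of `K` is at most `ε`. -/
def DistLE (K : SComplex V) (f g : Finset V → ℝ) (ε : ℝ) : Prop :=
  ∀ s ∈ K.faces, |f s - g s| ≤ ε

/-- The sublevel subcomplex `K^f_r = f⁻¹((-∞, r])`. -/
noncomputable def sublevel (K : SComplex V) (f : Finset V → ℝ) (r : ℝ) : Finset (Finset V) :=
  K.faces.filter (fun s => f s ≤ r)

variable (𝔽 : Type*) [Field 𝔽]

/-- The simplicial boundary operator on chains (finitely supported functions on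
simplices), with signs determined by the linear order on vertices. -/
noncomputable def bdry : (Finset V →₀ 𝔽) →ₗ[𝔽] (Finset V →₀ 𝔽) :=
  Finsupp.lsum 𝔽 (fun s => ∑ x ∈ s,
    ((-1 : 𝔽) ^ (s.filter (fun y => y < x)).card) • Finsupp.lsingle (s.erase x))

/-- The submodule of `n`-chains supported on simplices of `L` (of cardinality `n+1`). -/
def chainsIn (L : Finset (Finset V)) (n : ℕ) : Submodule 𝔽 (Finset V →₀ 𝔽) where
  carrier := {c | ∀ s ∈ c.support, s ∈ L ∧ s.card = n + 1}
  add_mem' := by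
    intro c d hc hd s hs
    rcases Finset.mem_union.mp (Finsupp.support_add hs) with h | h
    · exact hc s h
    · exact hd s h
  zero_mem' := by intro s hs; simp at hs
  smul_mem' := by
    intro a c hc s hs
    exact hc s (Finsupp.support_smul hs)

/-- `n`-cycles supported in `L`. -/
noncomputable def cyclesIn (L : Finset (Finset V)) (n : ℕ) : Submodule 𝔽 (Finset V →₀ 𝔽) :=
  chainsIn 𝔽 L n ⊓ LinearMap.ker (bdry 𝔽)

/-- `n`-boundaries of `(n+1)`-chains supported in `L`. -/
noncomputable def boundariesIn (L : Finset (Finset V)) (n : ℕ) : Submodule 𝔽 (Finset V →₀ 𝔽) :=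
  (chainsIn 𝔽 L (n + 1)).map (bdry 𝔽)

/-- `α` is an `n`-cycle in the subcomplex `L`. -/
def IsCycleIn (L : Finset (Finset V)) (n : ℕ) (α : Finset V →₀ 𝔽) : Prop :=
  α ∈ cyclesIn 𝔽 L n

/-- The class of `α` is trivial in `H_n(L)`. -/
def TrivialIn (L : Finset (Finset V)) (n : ℕ) (α : Finset V →₀ 𝔽) : Prop :=
  α ∈ boundariesIn 𝔽 L n

/-- `α` and `β` are homologous in `L`. -/
def HomologousIn (L : Finset (Finset V)) (n : ℕ) (α β : Finset V →₀ 𝔽) : Prop :=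
  α - β ∈ boundariesIn 𝔽 L n

/-- The homology class `[α] ∈ H_n(K^f_a)` is born at `a`: it is a nontrivial cycle
at level `a` and does not come from any strictly earlier level. -/
def BornAt (K : SComplex V) (f : Finset V → ℝ) (n : ℕ) (α : Finset V →₀ 𝔽) (a : ℝ) : Prop :=
  IsCycleIn 𝔽 (sublevel K f a) n α ∧ ¬ TrivialIn 𝔽 (sublevel K f a) n α ∧
  ∀ q < a, ¬ ∃ β, IsCycleIn 𝔽 (sublevel K f q) n β ∧ HomologousIn 𝔽 (sublevel K f a) n α β

/-- The class `[α]` terminates at level `b` in the filtration `K^f`. -/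
def TerminatesAt (K : SComplex V) (f : Finset V → ℝ) (n : ℕ) (α : Finset V →₀ 𝔽) (b : ℝ) : Prop :=
  TrivialIn 𝔽 (sublevel K f b) n α ∧ ∀ q < b, ¬ TrivialIn 𝔽 (sublevel K f q) n α

/-- `Δ` is the terminal simplex of `[α]` in the filtration `K^f`: the simplex added
at the level where `[α]` terminates. -/
def TerminalSimplex (K : SComplex V) (f : Finset V → ℝ) (n : ℕ) (α : Finset V →₀ 𝔽)
    (Δ : Finset V) : Prop :=
  Δ ∈ K.faces ∧ TerminatesAt 𝔽 K f n α (f Δ)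

/-- `Σ_ε`: the set of terminal simplices of `[α]` over all injective filtration
functions within sup-distance `ε` of `f`. -/
def TermSet (K : SComplex V) (f : Finset V → ℝ) (n : ℕ) (α : Finset V →₀ 𝔽) (ε : ℝ) :
    Set (Finset V) :=
  {Δ | ∃ g, IsFiltrationFun K g ∧ DistLE K f g ε ∧ TerminalSimplex 𝔽 K g n α Δ}

/-- `τ` gives birth to a class in `H_n(K^f)`. -/
def IsBirthSimplex (K : SComplex V) (f : Finset V → ℝ) (n : ℕ) (τ : Finset V) : Prop :=
  τ ∈ K.faces ∧ ∃ β : Finset V →₀ 𝔽, BornAt 𝔽 K f n β (f τ)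

/-- `τ` terminates a class in `H_n(K^f)`. -/
def IsTerminalSimplexOf (K : SComplex V) (f : Finset V → ℝ) (n : ℕ) (τ : Finset V) : Prop :=
  τ ∈ K.faces ∧ ∃ (β : Finset V →₀ 𝔽) (a : ℝ),
    BornAt 𝔽 K f n β a ∧ TerminatesAt 𝔽 K f n β (f τ)

/-- The linear order on the faces of `K` induced by `g`. -/
def inducedRel (K : SComplex V) (g : Finset V → ℝ) :
    {s // s ∈ K.faces} → {s // s ∈ K.faces} → Prop :=
  fun s t => g s.1 < g t.1

/-- `Π_ε`: the set of orders on the faces of `K` induced by injective filtration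
functions within sup-distance `ε` of `f`. -/
def OrderSet (K : SComplex V) (f : Finset V → ℝ) (ε : ℝ) :
    Set ({s // s ∈ K.faces} → {s // s ∈ K.faces} → Prop) :=
  {r | ∃ g, IsFiltrationFun K g ∧ DistLE K f g ε ∧ r = inducedRel K g}

/-- `f` is generic: equal absolute differences of `f`-values occur only for the
same unordered pair of faces. -/
def Generic (K : SComplex V) (f : Finset V → ℝ) : Prop :=
  ∀ s ∈ K.faces, ∀ t ∈ K.faces, ∀ s' ∈ K.faces, ∀ t' ∈ K.faces,
    s ≠ t → s' ≠ t' → |f s - f t| = |f s' - f t'| →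
    (s = s' ∧ t = t') ∨ (s = t' ∧ t = s')

/-- The rank of the map `H_n(K^f_p) → H_n(K^f_q)`, realized as the dimension of
the image of the cycles at level `p` in the quotient by boundaries at level `q`. -/
noncomputable def persRank (K : SComplex V) (f : Finset V → ℝ) (n : ℕ) (p q : ℝ) : ℕ :=
  Module.finrank 𝔽
    ↥(Submodule.map (boundariesIn 𝔽 (sublevel K f q) n).mkQ (cyclesIn 𝔽 (sublevel K f p) n))

/-- `[a, b)` is a bar of the `n`-th persistence module of `K^f`: the standard
inclusion–exclusion of ranks equals `1` for all sufficiently small offsets. -/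
def IsBar (K : SComplex V) (f : Finset V → ℝ) (n : ℕ) (a b : ℝ) : Prop :=
  a < b ∧ ∃ δ > 0, ∀ ε : ℝ, 0 < ε → ε < δ →
    persRank 𝔽 K f n a (b - ε) + persRank 𝔽 K f n (a - ε) b
      = persRank 𝔽 K f n a b + persRank 𝔽 K f n (a - ε) (b - ε) + 1

/-!
If `‖f - g‖_∞ ≤ ε`, the sublevel sets interleave: `K^f_r ⊆ K^g_{r+ε} ⊆ K^f_{r+2ε}`. Hence `α` is a
cycle of `K^g_{a+ε}` that is not yet a boundary there, and `[α]` dies in `K^g` at some level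
`d ≥ b - ε`. The death of `[α]` in `K^g` is caused by a single simplex, which kills exactly one
dimension of homology, so the level `c ≤ a + ε` at which `[α]` is born modulo the boundaries
present just before `d` gives a bar `[c, d)` of `K^g`. This bar is longer than `2ε`, so it is
matched, and the separation hypothesis leaves `[a, b)` as the only bar it can be matched with;
thus `b' = d`.
-/

namespace Submodule

variable {K M : Type*} [DivisionRing K] [AddCommGroup M] [Module K M]

theorem eq_sup_span_singleton_of_le_sup {B B' : Submodule K M} {x y : M} (hle : B ≤ B')
    (hle' : B' ≤ B ⊔ K ∙ y) (hx : x ∈ B') (hxB : x ∉ B) : B' = B ⊔ K ∙ x := by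
  refine le_antisymm (hle'.trans (sup_le le_sup_left ?_))
    (sup_le hle ((span_singleton_le_iff_mem _ _).2 hx))
  have hy : y ∈ span K (insert x (B : Set M)) := by
    refine mem_span_insert_exchange ?_ (by rwa [span_eq])
    rw [span_insert, span_eq, sup_comm]
    exact hle' hx
  rwa [span_insert, span_eq, sup_comm, ← span_singleton_le_iff_mem] at hy

theorem inf_sup_span_singleton_eq {Z B : Submodule K M} {z : M} (hz : z ∉ Z ⊔ B) :
    Z ⊓ (B ⊔ K ∙ z) = Z ⊓ B := by
  refine le_antisymm (fun x hx => ⟨hx.1, ?_⟩) (inf_le_inf_left _ le_sup_left)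
  by_contra hxB
  refine hz (sup_comm B Z ▸ sup_le_sup_left ((span_singleton_le_iff_mem _ _).2 hx.1) B ?_)
  have hz' : z ∈ span K (insert x (B : Set M)) := by
    refine mem_span_insert_exchange ?_ (by rwa [span_eq])
    rw [span_insert, span_eq, sup_comm]
    exact hx.2
  rwa [span_insert, span_eq, sup_comm] at hz'

theorem finrank_inf_sup_span_singleton {Z B : Submodule K M} [FiniteDimensional K Z] {z : M}
    (hz : z ∈ Z) (hzB : z ∉ B) :
    Module.finrank K ↥(Z ⊓ (B ⊔ K ∙ z)) = Module.finrank K ↥(Z ⊓ B) + 1 := by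
  have hz0 : z ≠ 0 := fun h => hzB (h ▸ B.zero_mem)
  have hsplit : Z ⊓ (B ⊔ K ∙ z) = Z ⊓ B ⊔ K ∙ z := by
    rw [inf_comm, sup_comm, sup_inf_assoc_of_le _ ((span_singleton_le_iff_mem _ _).2 hz),
      sup_comm, inf_comm]
  have hdisj : Z ⊓ B ⊓ K ∙ z = ⊥ :=
    ((disjoint_span_singleton' hz0).2 fun h => hzB (mem_inf.1 h).2).eq_bot
  have : FiniteDimensional K ↥(Z ⊓ B) := finiteDimensional_of_le inf_le_left
  have := finrank_sup_add_finrank_inf_eq (Z ⊓ B) (K ∙ z)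
  rw [hdisj, finrank_bot, finrank_span_singleton hz0, ← hsplit] at this
  omega

theorem finrank_map_mkQ_add_finrank_inf (Z B : Submodule K M) [FiniteDimensional K Z] :
    Module.finrank K ↥(Z.map B.mkQ) + Module.finrank K ↥(Z ⊓ B) = Module.finrank K Z := by
  have h := LinearMap.finrank_range_add_finrank_ker (B.mkQ ∘ₗ Z.subtype)
  have hker : comap Z.subtype B = comap Z.subtype (Z ⊓ B) := by
    rw [comap_inf, comap_subtype_self, top_inf_eq]
  rwa [LinearMap.range_comp, range_subtype, LinearMap.ker_comp, ker_mkQ, hker,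
    (comapSubtypeEquivOfLe (inf_le_left : Z ⊓ B ≤ Z)).finrank_eq] at h

end Submodule

set_option linter.unusedSectionVars false

noncomputable def strictSublevel (K : SComplex V) (g : Finset V → ℝ) (r : ℝ) :
    Finset (Finset V) :=
  K.faces.filter (fun s => g s < r)

section Sublevel

variable {K : SComplex V} {f g : Finset V → ℝ}

theorem mem_sublevel {r : ℝ} {s : Finset V} : s ∈ sublevel K g r ↔ s ∈ K.faces ∧ g s ≤ r :=
  Finset.mem_filter

theorem sublevel_mono {p q : ℝ} (h : p ≤ q) : sublevel K g p ⊆ sublevel K g q :=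
  fun _ hs => mem_sublevel.2 ⟨(mem_sublevel.1 hs).1, (mem_sublevel.1 hs).2.trans h⟩

theorem strictSublevel_subset_sublevel (r : ℝ) : strictSublevel K g r ⊆ sublevel K g r :=
  Finset.monotone_filter_right _ fun _ _ => le_of_lt

open Filter Topology in
theorem exists_sublevel_sub_eq_strictSublevel (K : SComplex V) (g : Finset V → ℝ) (r : ℝ) :
    ∃ δ > 0, ∀ ε : ℝ, 0 < ε → ε < δ → sublevel K g (r - ε) = strictSublevel K g r := by
  have h : ∀ᶠ ε in 𝓝[>] (0 : ℝ), ∀ s ∈ K.faces, (g s ≤ r - ε ↔ g s < r) := by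
    refine (eventually_all_finset _).2 fun s _ => ?_
    by_cases hs : g s < r
    · filter_upwards [Ioo_mem_nhdsGT (sub_pos.2 hs)] with ε hε
      exact iff_of_true (by linarith [hε.2]) hs
    · filter_upwards [self_mem_nhdsWithin] with ε (hε : 0 < ε)
      exact iff_of_false (by linarith [not_lt.1 hs]) hs
  obtain ⟨δ, hδ, hsub⟩ := (nhdsGT_basis (0 : ℝ)).eventually_iff.1 h
  exact ⟨δ, hδ, fun ε h0 h1 => Finset.filter_congr (hsub ⟨h0, h1⟩)⟩

theorem IsFiltrationFun.injOn (hg : IsFiltrationFun K g) : Set.InjOn g K.faces :=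
  fun s hs t ht h => hg.2 s hs t ht h

theorem DistLE.symm {ε : ℝ} (h : DistLE K f g ε) : DistLE K g f ε :=
  fun s hs => abs_sub_comm (f s) (g s) ▸ h s hs

theorem DistLE.sublevel_subset {ε : ℝ} (h : DistLE K f g ε) (r : ℝ) :
    sublevel K f r ⊆ sublevel K g (r + ε) := by
  intro s hs
  obtain ⟨hsK, hsr⟩ := mem_sublevel.1 hs
  exact mem_sublevel.2 ⟨hsK, by linarith [(abs_le.1 (h s hsK)).1]⟩

end Sublevel

section Chains

variable {𝔽} {L L' : Finset (Finset V)}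

theorem chainsIn_mono (h : L ⊆ L') (n : ℕ) : chainsIn 𝔽 L n ≤ chainsIn 𝔽 L' n :=
  fun _ hc s hs => ⟨h (hc s hs).1, (hc s hs).2⟩

theorem cyclesIn_mono (h : L ⊆ L') (n : ℕ) : cyclesIn 𝔽 L n ≤ cyclesIn 𝔽 L' n :=
  inf_le_inf_right _ (chainsIn_mono h n)

theorem boundariesIn_mono (h : L ⊆ L') (n : ℕ) : boundariesIn 𝔽 L n ≤ boundariesIn 𝔽 L' n :=
  Submodule.map_mono (chainsIn_mono h _)

instance (L : Finset (Finset V)) (n : ℕ) : FiniteDimensional 𝔽 (chainsIn 𝔽 L n) :=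
  have : FiniteDimensional 𝔽 (Finsupp.supported 𝔽 𝔽 (L : Set (Finset V))) :=
    (Finsupp.supportedEquivFinsupp _).symm.finiteDimensional
  Submodule.finiteDimensional_of_le
    (show chainsIn 𝔽 L n ≤ Finsupp.supported 𝔽 𝔽 (L : Set (Finset V)) from
      fun _ hc s hs => (hc s hs).1)

instance (L : Finset (Finset V)) (n : ℕ) : FiniteDimensional 𝔽 (cyclesIn 𝔽 L n) :=
  Submodule.finiteDimensional_of_le inf_le_left

variable {K : SComplex V} {g : Finset V → ℝ} {n : ℕ} {r : ℝ}

theorem exists_face_chainsIn_sublevel {c : Finset V →₀ 𝔽}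
    (hc : c ∈ chainsIn 𝔽 (sublevel K g r) n) (hc0 : c ≠ 0) :
    ∃ s ∈ K.faces, g s ≤ r ∧ c ∈ chainsIn 𝔽 (sublevel K g (g s)) n := by
  obtain ⟨s, hs, hmax⟩ := c.support.exists_max_image g (Finsupp.support_nonempty_iff.2 hc0)
  obtain ⟨hsK, hsr⟩ := mem_sublevel.1 (hc s hs).1
  exact ⟨s, hsK, hsr, fun t ht => ⟨mem_sublevel.2 ⟨(mem_sublevel.1 (hc t ht).1).1, hmax t ht⟩,
    (hc t ht).2⟩⟩

theorem exists_face_cyclesIn_sublevel {z : Finset V →₀ 𝔽}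
    (hz : z ∈ cyclesIn 𝔽 (sublevel K g r) n) (hz0 : z ≠ 0) :
    ∃ s ∈ K.faces, g s ≤ r ∧ z ∈ cyclesIn 𝔽 (sublevel K g (g s)) n := by
  obtain ⟨s, hs, hsr, hzs⟩ := exists_face_chainsIn_sublevel hz.1 hz0
  exact ⟨s, hs, hsr, hzs, hz.2⟩

theorem exists_face_boundariesIn_sublevel {x : Finset V →₀ 𝔽}
    (hx : x ∈ boundariesIn 𝔽 (sublevel K g r) n) (hx0 : x ≠ 0) :
    ∃ s ∈ K.faces, g s ≤ r ∧ x ∈ boundariesIn 𝔽 (sublevel K g (g s)) n := by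
  obtain ⟨c, hc, rfl⟩ := hx
  obtain ⟨s, hs, hsr, hcs⟩ :=
    exists_face_chainsIn_sublevel hc (by rintro rfl; exact hx0 (map_zero _))
  exact ⟨s, hs, hsr, c, hcs, rfl⟩

theorem boundariesIn_sublevel_le_sup (hg : Set.InjOn g K.faces) {s : Finset V}
    (hs : s ∈ K.faces) :
    boundariesIn 𝔽 (sublevel K g (g s)) n ≤
      boundariesIn 𝔽 (strictSublevel K g (g s)) n ⊔ 𝔽 ∙ bdry 𝔽 (Finsupp.single s 1) := by
  rintro _ ⟨c, hc, rfl⟩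
  have hc' : c.erase s ∈ chainsIn 𝔽 (strictSublevel K g (g s)) (n + 1) := by
    intro t ht
    rw [Finsupp.support_erase, Finset.mem_erase] at ht
    obtain ⟨htK, hts⟩ := mem_sublevel.1 (hc t ht.2).1
    exact ⟨Finset.mem_filter.2 ⟨htK, hts.lt_of_ne fun h => ht.1 (hg htK hs h)⟩, (hc t ht.2).2⟩
  have hsplit : bdry 𝔽 c = bdry 𝔽 (c.erase s) + c s • bdry 𝔽 (Finsupp.single s 1) := by
    conv_lhs => rw [← Finsupp.erase_add_single s c]
    rw [map_add, ← map_smul, Finsupp.smul_single, smul_eq_mul, mul_one]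
  rw [hsplit]
  exact Submodule.add_mem_sup ⟨_, hc', rfl⟩
    (Submodule.smul_mem _ _ (Submodule.mem_span_singleton_self _))

end Chains

theorem persRank_add_finrank_inf (K : SComplex V) (g : Finset V → ℝ) (n : ℕ) (p q : ℝ) :
    persRank 𝔽 K g n p q + Module.finrank 𝔽
        ↥(cyclesIn 𝔽 (sublevel K g p) n ⊓ boundariesIn 𝔽 (sublevel K g q) n) =
      Module.finrank 𝔽 (cyclesIn 𝔽 (sublevel K g p) n) :=
  Submodule.finrank_map_mkQ_add_finrank_inf _ _

section Persistence

variable {𝔽} {K : SComplex V} {g : Finset V → ℝ} {n : ℕ}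

theorem exists_face_minimal_level {P : ℝ → Prop}
    (hP : ∀ r, P r → ∃ s ∈ K.faces, g s ≤ r ∧ P (g s)) {r : ℝ} (hr : P r) :
    ∃ s ∈ K.faces, g s ≤ r ∧ P (g s) ∧ ∀ q < g s, ¬ P q := by
  classical
  obtain ⟨s₀, hs₀, hs₀r, hPs₀⟩ := hP r hr
  have hs₀P : s₀ ∈ K.faces.filter (P ∘ g) := Finset.mem_filter.2 ⟨hs₀, hPs₀⟩
  obtain ⟨s, hs, hmin⟩ := (K.faces.filter (P ∘ g)).exists_min_image g ⟨s₀, hs₀P⟩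
  obtain ⟨hsK, hPs⟩ := Finset.mem_filter.1 hs
  refine ⟨s, hsK, (hmin s₀ hs₀P).trans hs₀r, hPs, fun q hq hPq => ?_⟩
  obtain ⟨t, htK, htq, hPt⟩ := hP q hPq
  exact lt_irrefl _ ((hmin t (Finset.mem_filter.2 ⟨htK, hPt⟩)).trans_lt (htq.trans_lt hq))

theorem exists_terminatesAt {α : Finset V →₀ 𝔽} {r : ℝ}
    (hα : α ∈ boundariesIn 𝔽 (sublevel K g r) n) (hα0 : α ≠ 0) :
    ∃ s ∈ K.faces, g s ≤ r ∧ TerminatesAt 𝔽 K g n α (g s) := by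
  obtain ⟨s, hs, hsr, htriv, hmin⟩ :=
    exists_face_minimal_level (P := fun q => α ∈ boundariesIn 𝔽 (sublevel K g q) n)
      (fun _ hq => exists_face_boundariesIn_sublevel hq hα0) hα
  exact ⟨s, hs, hsr, htriv, hmin⟩

theorem TerminatesAt.not_mem_boundariesIn_strictSublevel {α : Finset V →₀ 𝔽} {d : ℝ}
    (h : TerminatesAt 𝔽 K g n α d) : α ∉ boundariesIn 𝔽 (strictSublevel K g d) n := by
  obtain ⟨δ, hδ, hgap⟩ := exists_sublevel_sub_eq_strictSublevel K g d
  rw [← hgap (δ / 2) (half_pos hδ) (half_lt_self hδ)]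
  exact h.2 _ (by linarith)

theorem isBar_of_birth_death (hg : Set.InjOn g K.faces) {s : Finset V} (hs : s ∈ K.faces)
    {c : ℝ} (hc : c < g s) {z : Finset V →₀ 𝔽} (hz : z ∈ cyclesIn 𝔽 (sublevel K g c) n)
    (hzd : z ∈ boundariesIn 𝔽 (sublevel K g (g s)) n)
    (hmin : ∀ q < c, ∀ w ∈ cyclesIn 𝔽 (sublevel K g q) n,
      z - w ∉ boundariesIn 𝔽 (strictSublevel K g (g s)) n) :
    IsBar 𝔽 K g n c (g s) := by
  set B₀ := boundariesIn 𝔽 (strictSublevel K g (g s)) n with hB₀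
  have hzB₀ : z ∉ B₀ := by simpa using hmin (c - 1) (by linarith) 0 (zero_mem _)
  have hB : boundariesIn 𝔽 (sublevel K g (g s)) n = B₀ ⊔ 𝔽 ∙ z :=
    Submodule.eq_sup_span_singleton_of_le_sup
      (boundariesIn_mono (strictSublevel_subset_sublevel _) n)
      (boundariesIn_sublevel_le_sup hg hs) hzd hzB₀
  obtain ⟨δ, hδ, hgap⟩ := exists_sublevel_sub_eq_strictSublevel K g (g s)
  refine ⟨hc, δ, hδ, fun ε hε hεδ => ?_⟩
  -- The line `𝔽 ∙ z` added at level `g s` meets the cycles at `c` but not those before `c`.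
  have hbirth : Module.finrank 𝔽 ↥(cyclesIn 𝔽 (sublevel K g c) n ⊓ (B₀ ⊔ 𝔽 ∙ z)) =
      Module.finrank 𝔽 ↥(cyclesIn 𝔽 (sublevel K g c) n ⊓ B₀) + 1 :=
    Submodule.finrank_inf_sup_span_singleton hz hzB₀
  have hbefore : cyclesIn 𝔽 (sublevel K g (c - ε)) n ⊓ (B₀ ⊔ 𝔽 ∙ z) =
      cyclesIn 𝔽 (sublevel K g (c - ε)) n ⊓ B₀ := by
    refine Submodule.inf_sup_span_singleton_eq fun hz' => ?_
    obtain ⟨w, hw, u, hu, rfl⟩ := Submodule.mem_sup.1 hz'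
    exact hmin (c - ε) (by linarith) w hw (by simpa using hu)
  have e₁ := persRank_add_finrank_inf 𝔽 K g n c (g s - ε)
  have e₂ := persRank_add_finrank_inf 𝔽 K g n (c - ε) (g s)
  have e₃ := persRank_add_finrank_inf 𝔽 K g n c (g s)
  have e₄ := persRank_add_finrank_inf 𝔽 K g n (c - ε) (g s - ε)
  rw [hgap ε hε hεδ, ← hB₀] at e₁ e₄
  rw [hB, hbefore] at e₂
  rw [hB, hbirth] at e₃
  omega

theorem exists_isBar_terminatesAt (hg : Set.InjOn g K.faces) {α : Finset V →₀ 𝔽} {r r' : ℝ}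
    (hα : α ∈ cyclesIn 𝔽 (sublevel K g r) n) (hαr : α ∉ boundariesIn 𝔽 (sublevel K g r) n)
    (hαr' : α ∈ boundariesIn 𝔽 (sublevel K g r') n) :
    ∃ c d, c ≤ r ∧ TerminatesAt 𝔽 K g n α d ∧ IsBar 𝔽 K g n c d := by
  have hα0 : α ≠ 0 := by rintro rfl; exact hαr (zero_mem _)
  obtain ⟨s, hs, -, hterm⟩ := exists_terminatesAt hαr' hα0
  have hrs : r < g s := lt_of_not_ge fun h => hαr (boundariesIn_mono (sublevel_mono h) n hterm.1)
  set B₀ := boundariesIn 𝔽 (strictSublevel K g (g s)) n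
  have hαB₀ : α ∉ B₀ := hterm.not_mem_boundariesIn_strictSublevel
  -- the level at which `[α]`, taken modulo `B₀`, is born
  obtain ⟨t, -, htr, ⟨z, hz, hαz⟩, hmin⟩ :=
    exists_face_minimal_level (P := fun q => ∃ w ∈ cyclesIn 𝔽 (sublevel K g q) n, α - w ∈ B₀)
      (fun q ⟨w, hw, hαw⟩ => by
        obtain ⟨t, ht, htq, hwt⟩ :=
          exists_face_cyclesIn_sublevel hw (by rintro rfl; exact hαB₀ (by simpa using hαw))
        exact ⟨t, ht, htq, w, hwt, hαw⟩)
      ⟨α, hα, by simp⟩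
  have hzd : z ∈ boundariesIn 𝔽 (sublevel K g (g s)) n := by
    simpa using sub_mem hterm.1 (boundariesIn_mono (strictSublevel_subset_sublevel _) n hαz)
  refine ⟨g t, g s, htr, hterm, isBar_of_birth_death hg hs (htr.trans_lt hrs) hz hzd ?_⟩
  exact fun q hq w hw hzw => hmin q hq ⟨w, hw, by simpa using add_mem hαz hzw⟩

end Persistence

theorem stmt12_general {V : Type*} [LinearOrder V] (𝔽 : Type*) [Field 𝔽]
    (K : SComplex V) (f : Finset V → ℝ)
    (n : ℕ) (α : Finset V →₀ 𝔽) (a b : ℝ)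
    (hborn : BornAt 𝔽 K f n α a) (hterm : TerminatesAt 𝔽 K f n α b)
    (ε : ℝ) (hε : 0 < ε) (hε4 : ε < (b - a) / 4)
    (hother : ∀ a' b' : ℝ, IsBar 𝔽 K f n a' b' → (a', b') ≠ (a, b) →
      a + 2 * ε < a' ∨ b' < b - 2 * ε)
    (g : Finset V → ℝ) (hg : IsFiltrationFun K g) (hdist : DistLE K f g ε)
    (a' b' : ℝ)
    (hmatch : ∃ (S T : Set (ℝ × ℝ)) (φ : ℝ × ℝ → ℝ × ℝ),
      S ⊆ {p : ℝ × ℝ | IsBar 𝔽 K f n p.1 p.2} ∧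
      T ⊆ {p : ℝ × ℝ | IsBar 𝔽 K g n p.1 p.2} ∧
      Set.BijOn φ S T ∧
      (∀ p ∈ S, |p.1 - (φ p).1| ≤ ε ∧ |p.2 - (φ p).2| ≤ ε) ∧
      (∀ p : ℝ × ℝ, IsBar 𝔽 K f n p.1 p.2 → p ∉ S → p.2 - p.1 ≤ 2 * ε) ∧
      (∀ p : ℝ × ℝ, IsBar 𝔽 K g n p.1 p.2 → p ∉ T → p.2 - p.1 ≤ 2 * ε) ∧
      (a, b) ∈ S ∧ φ (a, b) = (a', b')) :
    TerminatesAt 𝔽 K g n α b' := by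
  obtain ⟨S, T, φ, hS, -, hbij, hclose, -, hTshort, -, hφab⟩ := hmatch
  have hgf : ∀ r, boundariesIn 𝔽 (sublevel K g r) n ≤ boundariesIn 𝔽 (sublevel K f (r + ε)) n :=
    fun r => boundariesIn_mono (hdist.symm.sublevel_subset r) n
  obtain ⟨c, d, hca, hαd, hcd⟩ := exists_isBar_terminatesAt hg.injOn
    (cyclesIn_mono (hdist.sublevel_subset a) n hborn.1)
    (fun h => hterm.2 _ (by linarith) (hgf _ h))
    (boundariesIn_mono (hdist.sublevel_subset b) n hterm.1)
  have hbd : b - ε ≤ d := le_of_not_gt fun h => hterm.2 _ (by linarith) (hgf d hαd.1)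
  have hcdT : (c, d) ∈ T := by
    by_contra h
    linarith [hTshort (c, d) hcd h]
  obtain ⟨p, hpS, hφp⟩ := hbij.2.2 hcdT
  obtain ⟨hp₁, hp₂⟩ := hclose p hpS
  rw [hφp, abs_le] at hp₁ hp₂
  obtain rfl : p = (a, b) := by
    by_contra hpab
    rcases hother p.1 p.2 (hS hpS) hpab with h | h
    · linarith [hp₁.2]
    · linarith [hp₂.1]
  obtain rfl : b' = d := congrArg Prod.snd (hφab.symm.trans hφp)
  exact hαd

/-- Theorem `ThmBarcodeFinal`(1): under the separation
hypothesis on the other bars, the class `[α]`, viewed in the filtration `K^g`,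
terminates exactly at the right endpoint `b'` of the matched bar. -/
theorem stmt12 {V : Type*} [LinearOrder V] (𝔽 : Type*) [Field 𝔽]
    (K : SComplex V) (f : Finset V → ℝ) (hf : IsFiltrationFun K f)
    (n : ℕ) (α : Finset V →₀ 𝔽) (a b : ℝ)
    (hbar : IsBar 𝔽 K f n a b)
    (hborn : BornAt 𝔽 K f n α a) (hterm : TerminatesAt 𝔽 K f n α b)
    (ε : ℝ) (hε : 0 < ε) (hε4 : ε < (b - a) / 4)
    (hother : ∀ a' b' : ℝ, IsBar 𝔽 K f n a' b' → (a', b') ≠ (a, b) →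
      a + 2 * ε < a' ∨ b' < b - 2 * ε)
    (g : Finset V → ℝ) (hg : IsFiltrationFun K g) (hdist : DistLE K f g ε)
    (a' b' : ℝ)
    (hmatch : ∃ (S T : Set (ℝ × ℝ)) (φ : ℝ × ℝ → ℝ × ℝ),
      S ⊆ {p : ℝ × ℝ | IsBar 𝔽 K f n p.1 p.2} ∧
      T ⊆ {p : ℝ × ℝ | IsBar 𝔽 K g n p.1 p.2} ∧
      Set.BijOn φ S T ∧
      (∀ p ∈ S, |p.1 - (φ p).1| ≤ ε ∧ |p.2 - (φ p).2| ≤ ε) ∧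
      (∀ p : ℝ × ℝ, IsBar 𝔽 K f n p.1 p.2 → p ∉ S → p.2 - p.1 ≤ 2 * ε) ∧
      (∀ p : ℝ × ℝ, IsBar 𝔽 K g n p.1 p.2 → p ∉ T → p.2 - p.1 ≤ 2 * ε) ∧
      (a, b) ∈ S ∧ φ (a, b) = (a', b')) :
    TerminatesAt 𝔽 K g n α b' :=
  stmt12_general 𝔽 K f n α a b hborn hterm ε hε hε4 hother g hg hdist a' b' hmatch
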